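/- arXiv:2310.17931 — 5 statements merged into one kernel-verified Lean document; each statement's English description precedes it below -/
import Mathlib

section
/- Let r, K, F₁, Z₁, S₁, L be positive integers and let Q be a (r,K,F₁,Z₁,S₁) MAPDA, modeled as Q : Fin F₁ → Fin K → Option (Fin S₁). Define the (L·F₁)×K array P : (Fin L × Fin F₁) → Fin K → Option (Fin (L·S₁)) by P (l,f) k = none if Q f k = none, and P (l,f) k = some (l·S₁ + s) (as an element of Fin (L·S₁)) if Q f k = some s. Then P is a (r, K, L·F₁, L·Z₁, L·S₁) MAPDA; that is: each column of P contains exactly L·Z₁ entries equal to none, every element of Fin (L·S₁) occurs at least once in P, every element of Fin (L·S₁) occurs at most once in each column of P, and for every s' ∈ Fin (L·S₁) and every row (l,f) of P containing s', the number of columns k that contain s' somewhere and satisfy P (l,f) k ≠ none is at most r. -/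
/-!
Row `(l, f)` of the blown-up array is row `f` of `Q` with every integer `s` renamed to the pair
`(l, s)`, so the `L` copies of `Q` use pairwise disjoint alphabets. Stars are counted `L` times
per column, while an integer `(l, s)` lives only in the `l`-th copy, where it occurs exactly as
`s` does in `Q`; hence conditions C2–C4 for `(l, s)` reduce to those for `s`.
-/

open Finset

structure IsMAPDA {F K σ : Type*} [Fintype F] [Fintype K] [DecidableEq σ]
    (r Z : ℕ) (Q : F → K → Option σ) : Prop where
  card_filter_eq_none : ∀ k, #{f | Q f k = none} = Z
  exists_eq_some : ∀ s, ∃ f k, Q f k = some s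
  card_filter_eq_some_le_one : ∀ s k, #{f | Q f k = some s} ≤ 1
  card_filter_mem_column_le : ∀ s f, (∃ k, Q f k = some s) →
    #{k | (∃ f', Q f' k = some s) ∧ Q f k ≠ none} ≤ r

section BlowUp

variable {ι F K σ τ : Type*}

def blowUp (e : ι × σ ≃ τ) (Q : F → K → Option σ) : ι × F → K → Option τ :=
  fun p k => (Q p.2 k).map fun s => e (p.1, s)

variable (e : ι × σ ≃ τ) (Q : F → K → Option σ)

@[simp]
theorem blowUp_eq_none_iff (p : ι × F) (k : K) : blowUp e Q p k = none ↔ Q p.2 k = none :=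
  Option.map_eq_none_iff

@[simp]
theorem blowUp_eq_some_iff (p : ι × F) (k : K) (l : ι) (s : σ) :
    blowUp e Q p k = some (e (l, s)) ↔ p.1 = l ∧ Q p.2 k = some s := by
  simp only [blowUp, Option.map_eq_some_iff, e.injective.eq_iff, Prod.mk.injEq]
  constructor
  · rintro ⟨s', hs', rfl, rfl⟩
    exact ⟨rfl, hs'⟩
  · rintro ⟨rfl, hs⟩
    exact ⟨s, hs, rfl, rfl⟩

variable [Fintype ι] [Fintype F]

theorem filter_blowUp_eq_none (k : K) :
    univ.filter (fun p => blowUp e Q p k = none) = univ ×ˢ univ.filter (fun f => Q f k = none) := by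
  ext p
  simp

variable [DecidableEq σ] [DecidableEq τ]

theorem filter_blowUp_eq_some (k : K) (l : ι) (s : σ) :
    univ.filter (fun p => blowUp e Q p k = some (e (l, s))) =
      {l} ×ˢ univ.filter (fun f => Q f k = some s) := by
  ext p
  simp [and_comm, eq_comm, Prod.ext_iff]

variable [Fintype K]

theorem filter_blowUp_mem_column (p : ι × F) (l : ι) (s : σ) :
    univ.filter (fun k => (∃ p', blowUp e Q p' k = some (e (l, s))) ∧ blowUp e Q p k ≠ none) =
      univ.filter (fun k => (∃ f', Q f' k = some s) ∧ Q p.2 k ≠ none) := by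
  ext k
  simp only [mem_filter, mem_univ, true_and, blowUp_eq_some_iff, blowUp_eq_none_iff,
    Prod.exists, exists_and_left, exists_eq_left, ne_eq]

theorem IsMAPDA.blowUp {r Z : ℕ} {Q : F → K → Option σ} (hQ : IsMAPDA r Z Q) :
    IsMAPDA r (Fintype.card ι * Z) (blowUp e Q) where
  card_filter_eq_none k := by
    rw [filter_blowUp_eq_none, card_product, card_univ, hQ.card_filter_eq_none]
  exists_eq_some t := by
    obtain ⟨⟨l, s⟩, rfl⟩ := e.surjective t
    obtain ⟨f, k, hfk⟩ := hQ.exists_eq_some s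
    exact ⟨(l, f), k, (blowUp_eq_some_iff e Q _ k l s).2 ⟨rfl, hfk⟩⟩
  card_filter_eq_some_le_one t k := by
    obtain ⟨⟨l, s⟩, rfl⟩ := e.surjective t
    rw [filter_blowUp_eq_some, card_product, card_singleton, one_mul]
    exact hQ.card_filter_eq_some_le_one s k
  card_filter_mem_column_le t p := by
    obtain ⟨⟨l, s⟩, rfl⟩ := e.surjective t
    rintro ⟨k, hk⟩
    rw [filter_blowUp_mem_column]
    exact hQ.card_filter_mem_column_le s p.2 ⟨k, ((blowUp_eq_some_iff e Q p k l s).1 hk).2⟩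

end BlowUp

theorem stmt_0
    (r K F₁ Z₁ S₁ L : ℕ)
    (Q : Fin F₁ → Fin K → Option (Fin S₁))
    -- C1: each column of Q contains exactly Z₁ stars (none)
    (hC1 : ∀ k : Fin K,
      (Finset.univ.filter (fun f : Fin F₁ => Q f k = none)).card = Z₁)
    -- C2: each integer occurs at least once
    (hC2 : ∀ s : Fin S₁, ∃ f k, Q f k = some s)
    -- C3: each integer occurs at most once in each column
    (hC3 : ∀ (s : Fin S₁) (k : Fin K),
      (Finset.univ.filter (fun f : Fin F₁ => Q f k = some s)).card ≤ 1)
    -- C4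
    (hC4 : ∀ (s : Fin S₁) (f : Fin F₁), (∃ k, Q f k = some s) →
      (Finset.univ.filter (fun k : Fin K =>
        (∃ f', Q f' k = some s) ∧ Q f k ≠ none)).card ≤ r)
    (P : (Fin L × Fin F₁) → Fin K → Option (Fin (L * S₁)))
    (hP : ∀ (l : Fin L) (f : Fin F₁) (k : Fin K),
      P (l, f) k = (Q f k).map (fun s =>
        (⟨l.val * S₁ + s.val, by
          calc l.val * S₁ + s.val < l.val * S₁ + S₁ := Nat.add_lt_add_left s.isLt _
            _ = (l.val + 1) * S₁ := (Nat.succ_mul _ _).symm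
            _ ≤ L * S₁ := Nat.mul_le_mul_right _ l.isLt⟩ : Fin (L * S₁)))) :
    -- C1 for P
    (∀ k : Fin K,
      (Finset.univ.filter (fun p : Fin L × Fin F₁ => P p k = none)).card = L * Z₁) ∧
    -- C2 for P
    (∀ s' : Fin (L * S₁), ∃ p k, P p k = some s') ∧
    -- C3 for P
    (∀ (s' : Fin (L * S₁)) (k : Fin K),
      (Finset.univ.filter (fun p : Fin L × Fin F₁ => P p k = some s')).card ≤ 1) ∧
    -- C4 for P
    (∀ (s' : Fin (L * S₁)) (p : Fin L × Fin F₁), (∃ k, P p k = some s') →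
      (Finset.univ.filter (fun k : Fin K =>
        (∃ p', P p' k = some s') ∧ P p k ≠ none)).card ≤ r) := by
  have hP_eq : P = blowUp finProdFinEquiv Q := by
    funext ⟨l, f⟩ k
    rw [hP, blowUp]
    congr 1
    funext s
    ext
    rw [finProdFinEquiv_apply_val]
    ring
  -- `convert` bridges the `Fin`-specific and the generic `Fintype` decidability of `∃ f', _`.
  have hQ : IsMAPDA r Z₁ Q := ⟨hC1, hC2, hC3, by convert hC4⟩
  have hPQ := hQ.blowUp (ι := Fin L) finProdFinEquiv
  rw [Fintype.card_fin, ← hP_eq] at hPQ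
  exact ⟨hPQ.1, hPQ.2, hPQ.3, by convert hPQ.4⟩
end

section
/- Let r, K, F, Z, S be positive integers and let Q : Fin F → Fin K → Option (Fin S) be a (r,K,F,Z,S) MAPDA. Then S ≥ F − Z and, as an inequality of rationals (equivalently, K·F·(F−Z) ≤ S·(K·Z + r·F)), the ratio K·(F−Z)/S satisfies K·(F−Z)/S ≤ min{K·Z/F + r, K}. -/
theorem stmt_3
    (r K F Z S : ℕ)
    (hr : 0 < r) (hK : 0 < K) (hF : 0 < F) (hZ : 0 < Z) (hS : 0 < S)
    (Q : Fin F → Fin K → Option (Fin S))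
    -- C1: each column of Q contains exactly Z stars (none)
    (hC1 : ∀ k : Fin K,
      (Finset.univ.filter (fun f : Fin F => Q f k = none)).card = Z)
    -- C2: each integer occurs at least once
    (hC2 : ∀ s : Fin S, ∃ f k, Q f k = some s)
    -- C3: each integer occurs at most once in each column
    (hC3 : ∀ (s : Fin S) (k : Fin K),
      (Finset.univ.filter (fun f : Fin F => Q f k = some s)).card ≤ 1)
    -- C4
    (hC4 : ∀ (s : Fin S) (f : Fin F), (∃ k, Q f k = some s) →
      (Finset.univ.filter (fun k : Fin K =>
        (∃ f', Q f' k = some s) ∧ Q f k ≠ none)).card ≤ r) :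
    F - Z ≤ S ∧
    K * F * (F - Z) ≤ S * (K * Z + r * F) ∧
    ((K : ℚ) * (F - Z)) / S ≤ min ((K : ℚ) * Z / F + r) (K : ℚ) := by
  classical
  let g : Fin S → ℕ := fun s => (Finset.univ.filter (fun k => ∃ f, Q f k = some s)).card
  let n : Fin F → ℕ := fun f => (Finset.univ.filter (fun k : Fin K => Q f k ≠ none)).card
  have hg : ∀ s, g s = (Finset.univ.filter (fun k => ∃ f, Q f k = some s)).card :=
    fun _ => rfl
  have hn : ∀ f, n f = (Finset.univ.filter (fun k : Fin K => Q f k ≠ none)).card :=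
    fun _ => rfl
  -- occ s k : number of occurrences of s in column k, equals 0 or 1
  have hocc : ∀ (s : Fin S) (k : Fin K),
      (Finset.univ.filter (fun f : Fin F => Q f k = some s)).card
        = if (∃ f, Q f k = some s) then 1 else 0 := by
    intro s k
    by_cases h : ∃ f, Q f k = some s
    · simp only [h, if_true]
      refine le_antisymm (hC3 s k) ?_
      obtain ⟨f, hf⟩ := h
      exact Finset.card_pos.mpr ⟨f, by simp [hf]⟩
    · simp only [h, if_false]
      rw [Finset.card_eq_zero, Finset.filter_eq_empty_iff]
      intro f _
      exact fun hf => h ⟨f, hf⟩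
  have hZF : Z ≤ F := by
    rw [← hC1 ⟨0, hK⟩]
    exact (Finset.card_filter_le _ _).trans (by simp)
  -- each column has F - Z non-star entries
  have hcolstar : ∀ k : Fin K,
      (Finset.univ.filter (fun f : Fin F => Q f k ≠ none)).card = F - Z := by
    intro k
    have h := Finset.card_filter_add_card_filter_not
      (s := (Finset.univ : Finset (Fin F))) (p := fun f => Q f k = none)
    simp only [Finset.card_univ, Fintype.card_fin, hC1 k, ne_eq] at h ⊢
    omega
  -- number of distinct symbols in column k is F - Z
  have hcolsym : ∀ k : Fin K,
      ∑ s : Fin S, (if (∃ f, Q f k = some s) then 1 else 0) = F - Z := by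
    intro k
    have e0 : ∑ s : Fin S, (if (∃ f, Q f k = some s) then 1 else 0)
        = ∑ s : Fin S, ∑ f : Fin F, (if Q f k = some s then 1 else 0) := by
      refine Finset.sum_congr rfl fun s _ => ?_
      rw [← hocc s k, Finset.card_filter]
    rw [e0, Finset.sum_comm, ← hcolstar k, Finset.card_filter]
    refine Finset.sum_congr rfl fun f _ => ?_
    cases hQ : Q f k with
    | none => simp [hQ]
    | some s0 => simp [hQ]
  -- sum of g = K * (F - Z)
  have hgdef : ∀ s : Fin S, g s = ∑ k : Fin K, (if (∃ f, Q f k = some s) then 1 else 0) := by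
    intro s
    rw [hg s, Finset.card_filter]
  have hgsum : ∑ s : Fin S, g s = K * (F - Z) := by
    rw [Finset.sum_congr rfl (fun s _ => hgdef s), Finset.sum_comm,
      Finset.sum_congr rfl (fun k _ => hcolsym k)]
    simp [mul_comm]
  -- sum of n = K * (F - Z)
  have hndef : ∀ f : Fin F, n f = ∑ k : Fin K, (if Q f k ≠ none then 1 else 0) := by
    intro f
    rw [hn f, Finset.card_filter]
  have hnsum : ∑ f : Fin F, n f = K * (F - Z) := by
    rw [Finset.sum_congr rfl (fun f _ => hndef f), Finset.sum_comm]
    have e1 : ∀ k : Fin K, ∑ f : Fin F, (if Q f k ≠ none then 1 else 0) = F - Z := by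
      intro k; rw [← hcolstar k, Finset.card_filter]
    rw [Finset.sum_congr rfl (fun k _ => e1 k)]
    simp [mul_comm]
  -- n f ≤ K
  have hnK : ∀ f, n f ≤ K := by
    intro f
    rw [hn f]
    exact (Finset.card_filter_le _ _).trans (by simp)
  -- key lemma: for a non-star entry (f,k) with symbol s, g s + n f ≤ K + r
  have hkey : ∀ (f : Fin F) (k : Fin K) (s : Fin S), Q f k = some s → g s + n f ≤ K + r := by
    intro f k s hfk
    have h4 := hC4 s f ⟨k, hfk⟩
    have hsplit := Finset.card_filter_add_card_filter_not
      (s := Finset.univ.filter (fun k' : Fin K => ∃ f', Q f' k' = some s))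
      (p := fun k' => Q f k' ≠ none)
    rw [Finset.filter_filter, Finset.filter_filter] at hsplit
    have hsub : (Finset.univ.filter (fun k' : Fin K =>
          (∃ f', Q f' k' = some s) ∧ ¬ Q f k' ≠ none)).card
        ≤ (Finset.univ.filter (fun k' : Fin K => Q f k' = none)).card := by
      apply Finset.card_le_card
      intro k' hk'
      simp only [Finset.mem_filter, not_not] at hk' ⊢
      exact ⟨hk'.1, hk'.2.2⟩
    have hstar : (Finset.univ.filter (fun k' : Fin K => Q f k' = none)).card + n f = K := by
      have h := Finset.card_filter_add_card_filter_not
        (s := (Finset.univ : Finset (Fin K))) (p := fun k' => Q f k' = none)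
      simp only [Finset.card_univ, Fintype.card_fin] at h
      rw [hn f]
      simp only [ne_eq]
      omega
    rw [hg s]
    omega
  -- main counting inequality: ∑ g² + ∑ n² ≤ (K + r) * (K * (F - Z))
  have hmain : (∑ s : Fin S, g s * g s) + (∑ f : Fin F, n f * n f)
      ≤ (K + r) * (K * (F - Z)) := by
    have h1 : ∑ s : Fin S, g s * g s
        = ∑ f : Fin F, ∑ k : Fin K, (Q f k).elim 0 g := by
      have step1 : ∀ s : Fin S, g s * g s
          = ∑ k : Fin K, ∑ f : Fin F, (if Q f k = some s then g s else 0) := by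
        intro s
        have e1 : ∀ k : Fin K, ∑ f : Fin F, (if Q f k = some s then g s else 0)
            = (if (∃ f, Q f k = some s) then 1 else 0) * g s := by
          intro k
          rw [← hocc s k, Finset.card_filter, Finset.sum_mul]
          refine Finset.sum_congr rfl fun f _ => ?_
          by_cases h : Q f k = some s <;> simp [h]
        rw [Finset.sum_congr rfl (fun k _ => e1 k), ← Finset.sum_mul, ← hgdef s]
      calc ∑ s : Fin S, g s * g s
          = ∑ s : Fin S, ∑ k : Fin K, ∑ f : Fin F, (if Q f k = some s then g s else 0) :=
            Finset.sum_congr rfl (fun s _ => step1 s)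
        _ = ∑ k : Fin K, ∑ s : Fin S, ∑ f : Fin F, (if Q f k = some s then g s else 0) :=
            Finset.sum_comm
        _ = ∑ k : Fin K, ∑ f : Fin F, ∑ s : Fin S, (if Q f k = some s then g s else 0) :=
            Finset.sum_congr rfl (fun k _ => Finset.sum_comm)
        _ = ∑ f : Fin F, ∑ k : Fin K, ∑ s : Fin S, (if Q f k = some s then g s else 0) :=
            Finset.sum_comm
        _ = ∑ f : Fin F, ∑ k : Fin K, (Q f k).elim 0 g := by
            refine Finset.sum_congr rfl fun f _ => Finset.sum_congr rfl fun k _ => ?_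
            cases hQ : Q f k with
            | none => simp
            | some s0 => simp
    have h2 : ∀ f : Fin F, ∑ k : Fin K, (if Q f k ≠ none then n f else 0) = n f * n f := by
      intro f
      rw [← Finset.sum_filter, Finset.sum_const, smul_eq_mul, ← hn f]
    have h2' : ∀ f : Fin F, ∑ k : Fin K, (if Q f k ≠ none then K + r else 0)
        = n f * (K + r) := by
      intro f
      rw [← Finset.sum_filter, Finset.sum_const, smul_eq_mul, ← hn f]
    have h3 : ∀ f : Fin F, (∑ k : Fin K, (Q f k).elim 0 g)
          + (∑ k : Fin K, (if Q f k ≠ none then n f else 0))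
        ≤ ∑ k : Fin K, (if Q f k ≠ none then K + r else 0) := by
      intro f
      rw [← Finset.sum_add_distrib]
      refine Finset.sum_le_sum fun k _ => ?_
      cases hQ : Q f k with
      | none => simp
      | some s0 =>
        simp only [Option.elim, ne_eq, reduceCtorEq, not_false_eq_true, if_true]
        exact hkey f k s0 hQ
    calc (∑ s : Fin S, g s * g s) + (∑ f : Fin F, n f * n f)
        = ∑ f : Fin F, ((∑ k : Fin K, (Q f k).elim 0 g)
            + (∑ k : Fin K, (if Q f k ≠ none then n f else 0))) := by
          rw [Finset.sum_add_distrib, ← h1]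
          congr 1
          exact Finset.sum_congr rfl fun f _ => (h2 f).symm
      _ ≤ ∑ f : Fin F, ∑ k : Fin K, (if Q f k ≠ none then K + r else 0) :=
          Finset.sum_le_sum fun f _ => h3 f
      _ = ∑ f : Fin F, n f * (K + r) := Finset.sum_congr rfl fun f _ => h2' f
      _ = (K + r) * (K * (F - Z)) := by rw [← Finset.sum_mul, hnsum]; ring
  -- Z < F
  have hZltF : Z < F := by
    obtain ⟨f0, k0, hf0⟩ := hC2 ⟨0, hS⟩
    by_contra h
    have hEq : Z = F := le_antisymm hZF (le_of_not_gt h)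
    have hcol := hcolstar k0
    rw [hEq, Nat.sub_self, Finset.card_eq_zero, Finset.filter_eq_empty_iff] at hcol
    exact hcol (Finset.mem_univ f0) (by simp [hf0])
  -- F - Z ≤ S
  have hFZS : F - Z ≤ S := by
    calc F - Z = ∑ s : Fin S, (if (∃ f, Q f ⟨0, hK⟩ = some s) then 1 else 0) :=
        (hcolsym ⟨0, hK⟩).symm
      _ ≤ ∑ _s : Fin S, 1 := Finset.sum_le_sum fun s _ => by split <;> omega
      _ = S := by simp
  -- pass to ℚ
  set x : ℚ := (K : ℚ) * ((F : ℚ) - (Z : ℚ)) with hx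
  have hxcast : ((K * (F - Z) : ℕ) : ℚ) = x := by
    rw [hx]; push_cast [Nat.cast_sub hZF]; ring
  have hcs1 : x ^ 2 ≤ (S : ℚ) * ∑ s : Fin S, (g s : ℚ) ^ 2 := by
    have h := sq_sum_le_card_mul_sum_sq (s := (Finset.univ : Finset (Fin S)))
      (f := fun s => (g s : ℚ))
    simp only [Finset.card_univ, Fintype.card_fin] at h
    calc x ^ 2 = ((∑ s : Fin S, g s : ℕ) : ℚ) ^ 2 := by rw [hgsum, hxcast]
      _ = (∑ s : Fin S, (g s : ℚ)) ^ 2 := by push_cast; ring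
      _ ≤ (S : ℚ) * ∑ s : Fin S, (g s : ℚ) ^ 2 := h
  have hcs2 : x ^ 2 ≤ (F : ℚ) * ∑ f : Fin F, (n f : ℚ) ^ 2 := by
    have h := sq_sum_le_card_mul_sum_sq (s := (Finset.univ : Finset (Fin F)))
      (f := fun f => (n f : ℚ))
    simp only [Finset.card_univ, Fintype.card_fin] at h
    calc x ^ 2 = ((∑ f : Fin F, n f : ℕ) : ℚ) ^ 2 := by rw [hnsum, hxcast]
      _ = (∑ f : Fin F, (n f : ℚ)) ^ 2 := by push_cast; ring
      _ ≤ (F : ℚ) * ∑ f : Fin F, (n f : ℚ) ^ 2 := h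
  have hmainQ : (∑ s : Fin S, (g s : ℚ) ^ 2) + (∑ f : Fin F, (n f : ℚ) ^ 2)
      ≤ ((K : ℚ) + r) * x := by
    have hcast : (((∑ s : Fin S, g s * g s) + (∑ f : Fin F, n f * n f) : ℕ) : ℚ)
        ≤ (((K + r) * (K * (F - Z)) : ℕ) : ℚ) := by exact_mod_cast hmain
    push_cast [Nat.cast_sub hZF] at hcast
    calc (∑ s : Fin S, (g s : ℚ) ^ 2) + (∑ f : Fin F, (n f : ℚ) ^ 2)
        = (∑ s : Fin S, (g s : ℚ) * g s) + (∑ f : Fin F, (n f : ℚ) * n f) := by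
          simp [sq]
      _ ≤ ((K : ℚ) + r) * ((K : ℚ) * ((F : ℚ) - Z)) := hcast
      _ = ((K : ℚ) + r) * x := by rw [hx]
  have hxpos : 0 < x := by
    have hZq : (Z : ℚ) < F := by exact_mod_cast hZltF
    have hKq : (0 : ℚ) < K := by exact_mod_cast hK
    rw [hx]
    have : (0 : ℚ) < (F : ℚ) - Z := by linarith
    positivity
  have hSq : (0 : ℚ) < S := by exact_mod_cast hS
  have hFq : (0 : ℚ) < F := by exact_mod_cast hF
  have hKq : (0 : ℚ) < K := by exact_mod_cast hK
  -- central inequality: x * (F + S) ≤ S * F * (K + r)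
  have hcentral : x * ((F : ℚ) + S) ≤ (S : ℚ) * F * ((K : ℚ) + r) := by
    have a1 : (F : ℚ) * x ^ 2 ≤ (F : ℚ) * ((S : ℚ) * ∑ s : Fin S, (g s : ℚ) ^ 2) :=
      mul_le_mul_of_nonneg_left hcs1 (le_of_lt hFq)
    have a2 : (S : ℚ) * x ^ 2 ≤ (S : ℚ) * ((F : ℚ) * ∑ f : Fin F, (n f : ℚ) ^ 2) :=
      mul_le_mul_of_nonneg_left hcs2 (le_of_lt hSq)
    have h2 : (S : ℚ) * F * ((∑ s : Fin S, (g s : ℚ) ^ 2) + (∑ f : Fin F, (n f : ℚ) ^ 2))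
        ≤ (S : ℚ) * F * (((K : ℚ) + r) * x) :=
      mul_le_mul_of_nonneg_left hmainQ (by positivity)
    have h3 : x * ((F : ℚ) + S) * x ≤ (S : ℚ) * F * ((K : ℚ) + r) * x := by
      nlinarith [a1, a2, h2]
    exact le_of_mul_le_mul_right h3 hxpos
  have hintQ : (K : ℚ) * F * ((F : ℚ) - Z) ≤ (S : ℚ) * ((K : ℚ) * Z + (r : ℚ) * F) := by
    nlinarith [hcentral, hx]
  refine ⟨hFZS, ?_, ?_⟩
  · have h : ((K * F * (F - Z) : ℕ) : ℚ) ≤ ((S * (K * Z + r * F) : ℕ) : ℚ) := by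
      push_cast [Nat.cast_sub hZF]
      linarith [hintQ]
    exact_mod_cast h
  · rw [le_min_iff]
    constructor
    · have h : (K : ℚ) * ((F : ℚ) - Z) / S ≤ ((K : ℚ) * Z + (r : ℚ) * F) / F := by
        rw [div_le_div_iff₀ hSq hFq]
        nlinarith [hintQ]
      calc (K : ℚ) * ((F : ℚ) - Z) / S ≤ ((K : ℚ) * Z + (r : ℚ) * F) / F := h
        _ = (K : ℚ) * Z / F + r := by field_simp
    · rw [div_le_iff₀ hSq]
      have h : (F : ℚ) - Z ≤ S := by
        have h2 : ((F - Z : ℕ) : ℚ) ≤ S := by exact_mod_cast hFZS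
        rw [Nat.cast_sub hZF] at h2
        exact h2
      exact mul_le_mul_of_nonneg_left h (le_of_lt hKq)
end

section
/- Let K and L be positive integers with L ≤ K, and let u be a real number with 0 ≤ u and u + 1/L < 1. Suppose K·u + ⌈K/L⌉ ≥ K, where ⌈K/L⌉ is the ceiling of K/L. Then, over the reals, K·(1−u)/min(K, K·u + ⌈K/L⌉) < (1 − 1/L + 1/(u·L + 1))·(1−u). -/
theorem stmt_10
    (K L : ℕ) (hK : 0 < K) (hL : 0 < L) (hLK : L ≤ K)
    (u : ℝ) (hu0 : 0 ≤ u) (hu1 : u + 1 / (L : ℝ) < 1)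
    (hge : (K : ℝ) * u + (⌈(K : ℝ) / L⌉ : ℝ) ≥ (K : ℝ)) :
    (K : ℝ) * (1 - u) / min (K : ℝ) ((K : ℝ) * u + (⌈(K : ℝ) / L⌉ : ℝ))
      < (1 - 1 / (L : ℝ) + 1 / (u * L + 1)) * (1 - u) := by
  have hLpos : (0:ℝ) < L := Nat.cast_pos.mpr hL
  have hKpos : (0:ℝ) < K := Nat.cast_pos.mpr hK
  rw [min_eq_left hge]
  have h1 : (K:ℝ)*(1-u)/K = 1-u := by field_simp
  rw [h1]
  have hinv : (1:ℝ)/L * L = 1 := div_mul_cancel₀ 1 hLpos.ne'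
  have huL : u * L + 1 < L := by nlinarith
  have hpos : (0:ℝ) < u * L + 1 := by positivity
  have hlt : (1:ℝ)/L < 1/(u*L+1) := one_div_lt_one_div_of_lt hpos huL
  have hone : (1:ℝ) < 1 - 1/L + 1/(u*L+1) := by linarith
  have h1mu : (0:ℝ) < 1 - u := by
    have : (0:ℝ) < 1/L := by positivity
    linarith
  nlinarith
end

section
/- Let K and L be positive integers, and let u, μ be real numbers with 0 ≤ u, 0 < μ, and u + μ < 1. Suppose K·u + μ·L·⌈K/L⌉ ≥ K, where ⌈K/L⌉ is the ceiling of K/L. Then, over the reals, K·(1−u)/min(K, K·u + μ·L·⌈K/L⌉) < (1−u)/min(u+μ, 1). -/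
theorem stmt_11
    (K L : ℕ) (hK : 0 < K) (hL : 0 < L)
    (u μ : ℝ) (hu0 : 0 ≤ u) (hμ0 : 0 < μ) (huμ : u + μ < 1)
    (hge : (K : ℝ) * u + μ * L * (⌈(K : ℝ) / L⌉ : ℝ) ≥ (K : ℝ)) :
    (K : ℝ) * (1 - u) / min (K : ℝ) ((K : ℝ) * u + μ * L * (⌈(K : ℝ) / L⌉ : ℝ))
      < (1 - u) / min (u + μ) 1 := by
  have hKpos : (0:ℝ) < K := by exact_mod_cast hK
  rw [min_eq_left hge, min_eq_left huμ.le]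
  have hKne : (K:ℝ) ≠ 0 := ne_of_gt hKpos
  rw [mul_comm, mul_div_assoc, div_self hKne, mul_one]
  have hs : 0 < u + μ := by linarith
  rw [lt_div_iff₀ hs]
  nlinarith
end

section
/- Let K and L be positive integers with L ≤ K and L ∤ K (L does not divide K), and let u, μ be real numbers with 0 ≤ u < 1 and 0 < μ. Suppose K·u + μ·L·⌈K/L⌉ < K, where ⌈K/L⌉ is the ceiling of K/L. Then, over the reals, K·(1−u)/min(K, K·u + μ·L·⌈K/L⌉) < (1−u)/min(u+μ, 1). -/
theorem stmt_12
    (K L : ℕ) (hK : 0 < K) (hL : 0 < L) (hLK : L ≤ K) (hndvd : ¬ L ∣ K)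
    (u μ : ℝ) (hu0 : 0 ≤ u) (hu1 : u < 1) (hμ0 : 0 < μ)
    (hlt : (K : ℝ) * u + μ * L * (⌈(K : ℝ) / L⌉ : ℝ) < (K : ℝ)) :
    (K : ℝ) * (1 - u) / min (K : ℝ) ((K : ℝ) * u + μ * L * (⌈(K : ℝ) / L⌉ : ℝ))
      < (1 - u) / min (u + μ) 1 := by
  have hLpos : (0:ℝ) < L := by exact_mod_cast hL
  have hKpos : (0:ℝ) < K := by exact_mod_cast hK
  have hceil : (K:ℝ)/L < (⌈(K : ℝ) / L⌉ : ℝ) := by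
    rcases lt_or_eq_of_le (Int.le_ceil ((K:ℝ)/L)) with h | h
    · exact h
    · exfalso
      apply hndvd
      set c := ⌈(K : ℝ) / L⌉ with hc
      have hKeq : (K:ℝ) = (c:ℝ) * L := by
        field_simp [ne_of_gt hLpos] at h
        linarith [h]
      have hcpos : (0:ℤ) < c := by
        have : (0:ℝ) < (c:ℝ) := by nlinarith
        exact_mod_cast this
      have hZ : (K:ℤ) = c * L := by exact_mod_cast hKeq
      exact Int.natCast_dvd_natCast.mp ⟨c, by rw [hZ]; ring⟩
  have hKlt : (K:ℝ) < L * (⌈(K : ℝ) / L⌉ : ℝ) := by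
    have := (div_lt_iff₀ hLpos).mp hceil
    linarith
  have hDpos : 0 < (K : ℝ) * u + μ * L * (⌈(K : ℝ) / L⌉ : ℝ) := by
    have h1 : (0:ℝ) ≤ (K:ℝ) * u := by positivity
    nlinarith
  have huμ : u + μ < 1 := by nlinarith
  rw [min_eq_right hlt.le, min_eq_left huμ.le]
  rw [div_lt_div_iff₀ hDpos (by linarith)]
  have h1u : 0 < 1 - u := by linarith
  nlinarith [mul_pos h1u hμ0, mul_pos (mul_pos h1u hμ0) (sub_pos.mpr hKlt)]
end
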